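/- arXiv:1709.08308 — 6 statements merged into one kernel-verified Lean document; each statement's English description precedes it below -/
import Mathlib

section
/- Let θ, δ > 0, let e₀ ≤ 2δ/θ², and define e_{t+1}(η₀,…,η_t) = (1 - θη_t) e_t(η₀,…,η_{t-1}) + δη_t². Define the self-tuned sequence η₀* = (θ/(2δ)) e₀ and η_t* = η_{t-1}*(1 - (θ/2)η_{t-1}*). Then e_t evaluated at (η₀*,…,η_{t-1}*) equals (2δ/θ) η_t* for all t ≥ 0. -/
lemma selftuned_error_step {θ : ℝ} (hθ : θ ≠ 0) (δ η : ℝ) :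
    (1 - θ * η) * (2 * δ / θ * η) + δ * η ^ 2 = 2 * δ / θ * (η * (1 - θ / 2 * η)) := by
  field_simp
  ring

theorem selftuned_error_eq_general (θ δ e₀ : ℝ) (hθ : 0 < θ) (hδ : 0 < δ)
    (ηs : ℕ → ℝ) (hη0 : ηs 0 = θ / (2 * δ) * e₀)
    (hηrec : ∀ t, ηs (t + 1) = ηs t * (1 - θ / 2 * ηs t))
    (es : ℕ → ℝ) (hes0 : es 0 = e₀)
    (hesrec : ∀ t, es (t + 1) = (1 - θ * ηs t) * es t + δ * (ηs t) ^ 2) :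
    ∀ t, es t = 2 * δ / θ * ηs t := by
  intro t
  induction t with
  | zero =>
    rw [hes0, hη0]
    field_simp
  | succ t ih =>
    rw [hesrec, hηrec, ih, selftuned_error_step hθ.ne']

theorem selftuned_error_eq (θ δ e₀ : ℝ) (hθ : 0 < θ) (hδ : 0 < δ)
    (he₀ : 0 ≤ e₀) (he₀' : e₀ ≤ 2 * δ / θ ^ 2)
    (ηs : ℕ → ℝ) (hη0 : ηs 0 = θ / (2 * δ) * e₀)
    (hηrec : ∀ t, ηs (t + 1) = ηs t * (1 - θ / 2 * ηs t))
    (es : ℕ → ℝ) (hes0 : es 0 = e₀)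
    (hesrec : ∀ t, es (t + 1) = (1 - θ * ηs t) * es t + δ * (ηs t) ^ 2) :
    ∀ t, es t = 2 * δ / θ * ηs t :=
  selftuned_error_eq_general θ δ e₀ hθ hδ ηs hη0 hηrec es hes0 hesrec
end

section
/- Let θ, δ > 0, e₀ ≤ 2δ/θ², and define e_{t+1}(η₀,…,η_t) = (1 - θη_t)e_t + δη_t² with self-tuned stepsizes η₀* = (θ/(2δ))e₀, η_t* = η_{t-1}*(1 - (θ/2)η_{t-1}*). Then for every t ≥ 1 and every vector (η₀,…,η_{t-1}) with 0 < η_j ≤ 1/θ for all j, we have e_t(η₀,…,η_{t-1}) - e_t(η₀*,…,η_{t-1}*) ≥ δ(η_{t-1} - η_{t-1}*)², so the self-tuned stepsizes minimize e_t over (0,1/θ]^t. -/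
/-! The self-tuned stepsize keeps the invariant `θ e*_t = 2δ η*_t`, which says that `η*_t`
minimizes the one-step map `η ↦ (1 - θη) e*_t + δη²`. Hence one step from errors `a ≥ b = e*_t`
with stepsizes `η` and `η*_t` changes the gap into `(1 - θη)(a - b) + δ(η - η*_t)²`, which is
`≥ δ(η - η*_t)² ≥ 0` as long as `θη ≤ 1`. Induction gives `e_t ≥ e*_t`, and one more step the bound. -/

lemma mul_le_one_of_pos_of_le_one_div {θ η : ℝ} (hη : 0 < η) (hηθ : η ≤ 1 / θ) : θ * η ≤ 1 := by
  have hθ : 0 < θ := one_div_pos.mp (hη.trans_le hηθ)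
  rwa [le_div_iff₀ hθ, mul_comm] at hηθ

section ErrorRecursion

variable {θ δ : ℝ}

lemma mul_error_eq_of_selfTuned {b s : ℕ → ℝ}
    (hb : ∀ t, b (t + 1) = (1 - θ * s t) * b t + δ * s t ^ 2)
    (hs : ∀ t, s (t + 1) = s t * (1 - θ / 2 * s t)) (h0 : θ * b 0 = 2 * δ * s 0) (t : ℕ) :
    θ * b t = 2 * δ * s t := by
  induction t with
  | zero => exact h0
  | succ t ih =>
    rw [hb, hs]
    linear_combination (1 - θ * s t) * ih

lemma sq_sub_le_error_step_sub {a b η s : ℝ} (hb : θ * b = 2 * δ * s) (hθη : θ * η ≤ 1)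
    (hba : b ≤ a) :
    δ * (η - s) ^ 2 ≤ ((1 - θ * η) * a + δ * η ^ 2) - ((1 - θ * s) * b + δ * s ^ 2) := by
  have hgap : ((1 - θ * η) * a + δ * η ^ 2) - ((1 - θ * s) * b + δ * s ^ 2)
      = (1 - θ * η) * (a - b) + δ * (η - s) ^ 2 := by
    linear_combination (s - η) * hb
  rw [hgap]
  exact le_add_of_nonneg_left (mul_nonneg (by linarith) (by linarith))

lemma error_le_of_selfTuned {a b η s : ℕ → ℝ} (hδ : 0 ≤ δ)
    (ha : ∀ t, a (t + 1) = (1 - θ * η t) * a t + δ * η t ^ 2)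
    (hb : ∀ t, b (t + 1) = (1 - θ * s t) * b t + δ * s t ^ 2)
    (hinv : ∀ t, θ * b t = 2 * δ * s t) (h0 : b 0 ≤ a 0) :
    ∀ t, (∀ j < t, θ * η j ≤ 1) → b t ≤ a t
  | 0, _ => h0
  | t + 1, hη => by
    have hle := error_le_of_selfTuned hδ ha hb hinv h0 t fun j hj => hη j (hj.trans t.lt_succ_self)
    have hgap := sq_sub_le_error_step_sub (hinv t) (hη t t.lt_succ_self) hle
    rw [ha, hb]
    linarith [mul_nonneg hδ (sq_nonneg (η t - s t))]

end ErrorRecursion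

theorem selftuned_minimizes_error_general (θ δ e₀ : ℝ) (hδ : 0 < δ)
    (e : (ℕ → ℝ) → ℕ → ℝ)
    (he0 : ∀ η : ℕ → ℝ, e η 0 = e₀)
    (herec : ∀ (η : ℕ → ℝ) (t : ℕ),
      e η (t + 1) = (1 - θ * η t) * e η t + δ * (η t) ^ 2)
    (ηs : ℕ → ℝ) (hη0 : ηs 0 = θ / (2 * δ) * e₀)
    (hηrec : ∀ t, ηs (t + 1) = ηs t * (1 - θ / 2 * ηs t)) :
    ∀ (t : ℕ) (η : ℕ → ℝ), (∀ j ≤ t, 0 < η j ∧ η j ≤ 1 / θ) →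
      e η (t + 1) - e ηs (t + 1) ≥ δ * (η t - ηs t) ^ 2 := by
  intro t η hη
  have hθη : ∀ j ≤ t, θ * η j ≤ 1 := fun j hj =>
    mul_le_one_of_pos_of_le_one_div (hη j hj).1 (hη j hj).2
  have hinv : ∀ t, θ * e ηs t = 2 * δ * ηs t :=
    mul_error_eq_of_selfTuned (herec ηs) hηrec (by rw [he0, hη0]; field_simp)
  have hle : e ηs t ≤ e η t :=
    error_le_of_selfTuned hδ.le (herec η) (herec ηs) hinv (by rw [he0, he0]) t
      fun j hj => hθη j hj.le
  rw [herec η, herec ηs]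
  exact sq_sub_le_error_step_sub (hinv t) (hθη t le_rfl) hle

theorem selftuned_minimizes_error (θ δ e₀ : ℝ) (hθ : 0 < θ) (hδ : 0 < δ)
    (he₀ : 0 ≤ e₀) (he₀' : e₀ ≤ 2 * δ / θ ^ 2)
    (e : (ℕ → ℝ) → ℕ → ℝ)
    (he0 : ∀ η : ℕ → ℝ, e η 0 = e₀)
    (herec : ∀ (η : ℕ → ℝ) (t : ℕ),
      e η (t + 1) = (1 - θ * η t) * e η t + δ * (η t) ^ 2)
    (ηs : ℕ → ℝ) (hη0 : ηs 0 = θ / (2 * δ) * e₀)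
    (hηrec : ∀ t, ηs (t + 1) = ηs t * (1 - θ / 2 * ηs t)) :
    ∀ (t : ℕ) (η : ℕ → ℝ), (∀ j ≤ t, 0 < η j ∧ η j ≤ 1 / θ) →
      e η (t + 1) - e ηs (t + 1) ≥ δ * (η t - ηs t) ^ 2 :=
  selftuned_minimizes_error_general θ δ e₀ hδ e he0 herec ηs hη0 hηrec
end

section
/- Let θ > 0 and let the sequence {η_t} satisfy 0 < η₀ ≤ 1/θ and η_{t+1} = η_t(1 - (θ/2)η_t). Then 0 < η_t ≤ 1/θ for all t, the sequence is non-increasing, and η_t < 2/(θt) for all t ≥ 1. -/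
/-!
Write `c = θ / 2`. A step `x ↦ x (1 - c x)` keeps `x` positive and does not increase it as long as
`c x < 1`, which `η₀ ≤ 1 / θ` then guarantees forever. Since `(1 + u)(1 - u) ≤ 1`, each step raises
the reciprocal by at least `c`, so `1 / η_t ≥ θ + t θ / 2 > t θ / 2`.
-/

section Step

variable {c x : ℝ}

theorem mul_one_sub_mul_pos (hx : 0 < x) (hcx : c * x < 1) : 0 < x * (1 - c * x) :=
  mul_pos hx (sub_pos.mpr hcx)

theorem mul_one_sub_mul_le_self (hc : 0 ≤ c) (hx : 0 ≤ x) : x * (1 - c * x) ≤ x := by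
  nlinarith [mul_nonneg hc (mul_nonneg hx hx)]

theorem inv_add_le_inv_mul_one_sub_mul (hx : 0 < x) (hcx : c * x < 1) :
    x⁻¹ + c ≤ (x * (1 - c * x))⁻¹ := by
  calc x⁻¹ + c = (1 + c * x) * (1 - c * x) * (x * (1 - c * x))⁻¹ := by
        field_simp
        rw [mul_div_cancel_right₀ _ (by linarith)]
    _ ≤ 1 * (x * (1 - c * x))⁻¹ := by
        gcongr
        nlinarith [sq_nonneg (c * x)]
    _ = (x * (1 - c * x))⁻¹ := one_mul _

end Step

section Sequence

variable {c : ℝ} {x : ℕ → ℝ}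

theorem pos_and_le_init_of_rec (hc : 0 ≤ c) (hx0 : 0 < x 0) (hcx0 : c * x 0 < 1)
    (hrec : ∀ t, x (t + 1) = x t * (1 - c * x t)) (t : ℕ) : 0 < x t ∧ x t ≤ x 0 := by
  induction t with
  | zero => exact ⟨hx0, le_rfl⟩
  | succ t ih =>
    obtain ⟨hpos, hle⟩ := ih
    have hcx : c * x t < 1 := (mul_le_mul_of_nonneg_left hle hc).trans_lt hcx0
    rw [hrec t]
    exact ⟨mul_one_sub_mul_pos hpos hcx, (mul_one_sub_mul_le_self hc hpos.le).trans hle⟩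

theorem inv_init_add_le_inv_of_rec (hc : 0 ≤ c) (hx0 : 0 < x 0) (hcx0 : c * x 0 < 1)
    (hrec : ∀ t, x (t + 1) = x t * (1 - c * x t)) (t : ℕ) : (x 0)⁻¹ + t * c ≤ (x t)⁻¹ := by
  induction t with
  | zero => simp
  | succ t ih =>
    obtain ⟨hpos, hle⟩ := pos_and_le_init_of_rec hc hx0 hcx0 hrec t
    have hcx : c * x t < 1 := (mul_le_mul_of_nonneg_left hle hc).trans_lt hcx0
    rw [hrec t]
    push_cast
    linarith [inv_add_le_inv_mul_one_sub_mul hpos hcx]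

end Sequence

theorem selftuned_stepsize_bounds (θ : ℝ) (hθ : 0 < θ)
    (η : ℕ → ℝ) (h0 : 0 < η 0) (h0' : η 0 ≤ 1 / θ)
    (hrec : ∀ t, η (t + 1) = η t * (1 - θ / 2 * η t)) :
    (∀ t, 0 < η t ∧ η t ≤ 1 / θ) ∧
      (∀ t, η (t + 1) ≤ η t) ∧
      (∀ t : ℕ, 1 ≤ t → η t < 2 / (θ * t)) := by
  have hc : 0 ≤ θ / 2 := by positivity
  have hθη0 : θ ≤ (η 0)⁻¹ := by rwa [le_inv_comm₀ hθ h0, ← one_div]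
  have hcη0 : θ / 2 * η 0 < 1 := by
    have : θ * η 0 ≤ 1 := by rwa [le_div_iff₀' hθ] at h0'
    linarith
  have hbounds := pos_and_le_init_of_rec hc h0 hcη0 hrec
  refine ⟨fun t => ⟨(hbounds t).1, (hbounds t).2.trans h0'⟩, fun t => ?_, fun t ht => ?_⟩
  · rw [hrec t]
    exact mul_one_sub_mul_le_self hc (hbounds t).1.le
  · have ht' : (0 : ℝ) < t := by exact_mod_cast ht
    have hinv : θ * t / 2 < (η t)⁻¹ := by
      linarith [inv_init_add_le_inv_of_rec hc h0 hcη0 hrec t]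
    rw [← inv_div]
    exact lt_inv_of_lt_inv₀ (by positivity) hinv
end

section
/- Let θ, δ > 0, e₀ ≤ 2δ/θ², and define e_{t+1} = (1 - θη_t*)e_t + δ(η_t*)² with η₀* = (θ/(2δ))e₀ and η_t* = η_{t-1}*(1 - (θ/2)η_{t-1}*). Then e_t ≤ (4δ/θ²)(1/t) for all t ≥ 1. -/
/-!
The error stays proportional to the stepsize, `e_t = (2δ/θ) η_t`, so it suffices to bound the
stepsizes. The rescaled stepsizes `a_t = (θ/2) η_t` follow the logistic map `a ↦ a (1 - a)` from
`a_0 ≤ 1/2`, and this map sends `(-∞, 1/n]` into `(-∞, 1/(n+1)]`; hence `a_t ≤ 1/(t+2)`.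
-/

theorem mul_one_sub_le_one_div_add_one {a n : ℝ} (hn : 0 < n) (ha : a ≤ 1 / n) :
    a * (1 - a) ≤ 1 / (n + 1) := by
  rw [le_div_iff₀ hn] at ha
  rw [le_div_iff₀ (by linarith)]
  -- for `n ≤ 2`, `a (1 - a) ≤ 1/4` suffices; for `n ≥ 2`, `(1 - a n) (n - 1 - a n) ≥ 0` is the key
  rcases le_total n 2 with hn2 | hn2
  · nlinarith [mul_nonneg (by linarith : (0 : ℝ) ≤ n + 1) (sq_nonneg (2 * a - 1))]
  · have hc : a * (1 - a) * n ^ 2 ≤ n - 1 := by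
      nlinarith [mul_nonneg (sub_nonneg.2 ha) (by linarith : 0 ≤ n - 1 - a * n)]
    nlinarith [mul_le_mul_of_nonneg_right hc (by linarith : (0 : ℝ) ≤ n + 1)]

theorem logistic_le_one_div_add_two {a : ℕ → ℝ} (h0 : a 0 ≤ 1 / 2)
    (hrec : ∀ t, a (t + 1) = a t * (1 - a t)) (t : ℕ) : a t ≤ 1 / (t + 2) := by
  induction t with
  | zero => simpa using h0
  | succ t ih =>
    rw [hrec, Nat.cast_succ, add_right_comm]
    exact mul_one_sub_le_one_div_add_one (by positivity) ih

theorem error_eq_mul_stepsize {θ δ : ℝ} (hθ : θ ≠ 0) {ηs es : ℕ → ℝ}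
    (h0 : es 0 = 2 * δ / θ * ηs 0)
    (hηrec : ∀ t, ηs (t + 1) = ηs t * (1 - θ / 2 * ηs t))
    (hesrec : ∀ t, es (t + 1) = (1 - θ * ηs t) * es t + δ * (ηs t) ^ 2) (t : ℕ) :
    es t = 2 * δ / θ * ηs t := by
  induction t with
  | zero => exact h0
  | succ t ih =>
    rw [hesrec, hηrec, ih]
    field_simp
    ring

theorem selftuned_error_rate_general (θ δ e₀ : ℝ) (hθ : 0 < θ) (hδ : 0 < δ)
    (he₀' : e₀ ≤ 2 * δ / θ ^ 2)
    (ηs : ℕ → ℝ) (hη0 : ηs 0 = θ / (2 * δ) * e₀)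
    (hηrec : ∀ t, ηs (t + 1) = ηs t * (1 - θ / 2 * ηs t))
    (es : ℕ → ℝ) (hes0 : es 0 = e₀)
    (hesrec : ∀ t, es (t + 1) = (1 - θ * ηs t) * es t + δ * (ηs t) ^ 2) :
    ∀ t : ℕ, 1 ≤ t → es t ≤ 4 * δ / θ ^ 2 * (1 / t) := by
  intro t ht
  have hes : es t = 4 * δ / θ ^ 2 * (θ / 2 * ηs t) := by
    rw [error_eq_mul_stepsize hθ.ne' (by rw [hes0, hη0]; field_simp) hηrec hesrec t]
    field_simp
    ring
  have ha0 : θ / 2 * ηs 0 ≤ 1 / 2 := by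
    rw [hη0, le_div_iff₀ (by norm_num)]
    calc θ / 2 * (θ / (2 * δ) * e₀) * 2 = θ ^ 2 / (2 * δ) * e₀ := by ring
      _ ≤ θ ^ 2 / (2 * δ) * (2 * δ / θ ^ 2) := by gcongr
      _ = 1 := by field_simp
  have ha : θ / 2 * ηs t ≤ 1 / (t + 2) :=
    logistic_le_one_div_add_two (a := fun t => θ / 2 * ηs t) ha0
      (fun t => by simp only [hηrec]; ring) t
  rw [hes]
  gcongr
  exact ha.trans (one_div_le_one_div_of_le (by exact_mod_cast ht) (by linarith))

theorem selftuned_error_rate (θ δ e₀ : ℝ) (hθ : 0 < θ) (hδ : 0 < δ)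
    (he₀ : 0 ≤ e₀) (he₀' : e₀ ≤ 2 * δ / θ ^ 2)
    (ηs : ℕ → ℝ) (hη0 : ηs 0 = θ / (2 * δ) * e₀)
    (hηrec : ∀ t, ηs (t + 1) = ηs t * (1 - θ / 2 * ηs t))
    (es : ℕ → ℝ) (hes0 : es 0 = e₀)
    (hesrec : ∀ t, es (t + 1) = (1 - θ * ηs t) * es t + δ * (ηs t) ^ 2) :
    ∀ t : ℕ, 1 ≤ t → es t ≤ 4 * δ / θ ^ 2 * (1 / t) :=
  selftuned_error_rate_general θ δ e₀ hθ hδ he₀' ηs hη0 hηrec es hes0 hesrec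
end

section
/- Let B ⊆ ℝ^n be closed and convex, ω: ℝ^n → ℝ strongly convex with parameter μ_ω, D_ω its Bregman divergence, and let β₊ = argmin_{z ∈ B} {⟨ηg, z⟩ + D_ω(β, z)} for β ∈ B, g ∈ ℝ^n, η > 0. Then for every u ∈ B: D_ω(β₊, u) ≤ D_ω(β, u) + η⟨g, u - β⟩ + (η²/(2μ_ω))‖g‖*², where ‖·‖* is the dual norm. -/
/-! The three-point identity writes `D(β₊, u)` as `D(β, u) - D(β, β₊) - ⟪∇ω β₊ - ∇ω β, u - β₊⟫`.
First-order optimality of `β₊` for the prox objective bounds the last term by `η ⟪g, u - β₊⟫`,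
strong convexity gives `D(β, β₊) ≥ μ/2 ‖β₊ - β‖²`, and Young's inequality absorbs the remaining
`η ⟪g, β - β₊⟫` into `η²/(2μ) ‖g‖² + μ/2 ‖β₊ - β‖²`. -/

open RealInnerProductSpace

/-- Bregman divergence of `ω`. -/
noncomputable def bregman {n : ℕ} (ω : EuclideanSpace ℝ (Fin n) → ℝ)
    (β₁ β₂ : EuclideanSpace ℝ (Fin n)) : ℝ :=
  ω β₂ - ω β₁ - ⟪gradient ω β₁, β₂ - β₁⟫

section
variable {E : Type*} [NormedAddCommGroup E] [NormedSpace ℝ E]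
  {f : E → ℝ} {f' : E →L[ℝ] ℝ} {s : Set E} {a x y : E} {m : ℝ}

theorem IsMinOn.hasFDerivWithinAt_sub_nonneg (h : IsMinOn f s a)
    (hf : HasFDerivWithinAt f f' s a) (hs : Convex ℝ s) (ha : a ∈ s) (hy : y ∈ s) :
    0 ≤ f' (y - a) :=
  h.localize.hasFDerivWithinAt_nonneg hf
    (sub_mem_posTangentConeAt_of_segment_subset (hs.segment_subset ha hy))

/-- The gap in the strong-convexity inequality along `t ↦ x + t • (y - x)` vanishes at `t = 0` and
is nonnegative on `[0, 1]`, so its derivative at `0` is nonnegative. -/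
theorem StrongConvexOn.add_sq_le_of_hasFDerivAt (hf : StrongConvexOn s m f) (hx : x ∈ s)
    (hy : y ∈ s) (hfx : HasFDerivAt f f' x) :
    f x + f' (y - x) + m / 2 * ‖y - x‖ ^ 2 ≤ f y := by
  let c := m / 2 * ‖y - x‖ ^ 2
  let gap : ℝ → ℝ := fun t ↦ (1 - t) * f x + t * f y - (1 - t) * t * c - f (x + t • (y - x))
  have hmin : IsMinOn gap (Set.Icc 0 1) 0 := by
    intro t ⟨ht₀, ht₁⟩
    have hconv := hf.2 hx hy (sub_nonneg.2 ht₁) ht₀ (sub_add_cancel 1 t)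
    rw [show (1 - t) • x + t • y = x + t • (y - x) by module, norm_sub_rev] at hconv
    simp only [smul_eq_mul] at hconv
    show gap 0 ≤ gap t
    simp only [gap, c, zero_smul, add_zero]
    linarith
  have hline : HasDerivAt (fun t : ℝ ↦ x + t • (y - x)) (y - x) 0 := by
    simpa using ((hasDerivAt_id (0 : ℝ)).smul_const (y - x)).const_add x
  have hgap : HasDerivAt gap (-f x + f y - c - f' (y - x)) 0 := by
    have hcomp := hfx.comp_hasDerivAt_of_eq 0 hline (by simp)
    have hpoly : HasDerivAt (fun t : ℝ ↦ (1 - t) * f x + t * f y - (1 - t) * t * c)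
        (-f x + f y - c) 0 := by
      have hid := hasDerivAt_id (0 : ℝ)
      exact ((((hid.const_sub 1).mul_const (f x)).add (hid.mul_const (f y))).sub
        (((hid.const_sub 1).mul hid).mul_const c)).congr_deriv (by simp)
    exact hpoly.sub hcomp
  have hslope := hmin.hasFDerivWithinAt_sub_nonneg hgap.hasFDerivAt.hasFDerivWithinAt
    (convex_Icc 0 1) ⟨le_rfl, zero_le_one⟩ ⟨zero_le_one, le_rfl⟩
  simp only [sub_zero, ContinuousLinearMap.toSpanSingleton_apply, one_smul] at hslope
  linarith [show c = m / 2 * ‖y - x‖ ^ 2 from rfl]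

end

theorem real_inner_le_norm_sq_div_add_mul_norm_sq {F : Type*} [NormedAddCommGroup F]
    [InnerProductSpace ℝ F] {m : ℝ} (hm : 0 < m) (x y : F) :
    ⟪x, y⟫ ≤ ‖x‖ ^ 2 / (2 * m) + m / 2 * ‖y‖ ^ 2 := by
  refine (real_inner_le_norm x y).trans ?_
  rw [div_add' _ _ _ (by positivity), le_div_iff₀ (by positivity)]
  nlinarith [sq_nonneg (‖x‖ - m * ‖y‖)]

theorem bregman_three_point {n : ℕ} (ω : EuclideanSpace ℝ (Fin n) → ℝ)
    (x y u : EuclideanSpace ℝ (Fin n)) :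
    bregman ω y u = bregman ω x u - bregman ω x y - ⟪gradient ω y - gradient ω x, u - y⟫ := by
  simp only [bregman, inner_sub_left, inner_sub_right]
  ring

section Bregman
variable {n : ℕ} {ω : EuclideanSpace ℝ (Fin n) → ℝ} {B : Set (EuclideanSpace ℝ (Fin n))}
  {x y u v : EuclideanSpace ℝ (Fin n)} {m : ℝ}

theorem StrongConvexOn.sq_le_bregman {s : Set (EuclideanSpace ℝ (Fin n))}
    (hω : StrongConvexOn s m ω) (hx : x ∈ s) (hy : y ∈ s) (hd : DifferentiableAt ℝ ω x) :
    m / 2 * ‖y - x‖ ^ 2 ≤ bregman ω x y := by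
  have := hω.add_sq_le_of_hasFDerivAt hx hy hd.hasFDerivAt
  rw [← inner_gradient_left] at this
  rw [bregman]
  linarith

theorem hasGradientAt_bregman (hω : DifferentiableAt ℝ ω y) :
    HasGradientAt (bregman ω x) (gradient ω y - gradient ω x) y := by
  rw [hasGradientAt_iff_hasFDerivAt]
  have hlin : HasFDerivAt (fun z ↦ ⟪gradient ω x, z - x⟫) (innerSL ℝ (gradient ω x)) y := by
    simpa using ((innerSL ℝ (gradient ω x)).hasFDerivAt (x := y)).sub_const ⟪gradient ω x, x⟫
  refine ((hω.hasFDerivAt.sub_const (ω x)).sub hlin).congr_fderiv ?_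
  ext v
  simp [inner_gradient_left]

theorem IsMinOn.inner_add_gradient_sub_nonneg
    (hmin : IsMinOn (fun z ↦ ⟪v, z⟫ + bregman ω x z) B y) (hB : Convex ℝ B) (hy : y ∈ B)
    (hu : u ∈ B) (hω : DifferentiableAt ℝ ω y) :
    0 ≤ ⟪v + (gradient ω y - gradient ω x), u - y⟫ := by
  have hderiv := (innerSL ℝ v).hasFDerivAt.add (hasGradientAt_bregman (x := x) hω).hasFDerivAt
  simpa only [add_apply, innerSL_apply_apply, InnerProductSpace.toDual_apply_apply,
    inner_add_left] using
    hmin.hasFDerivWithinAt_sub_nonneg hderiv.hasFDerivWithinAt hB hy hu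

end Bregman

theorem prox_step_inequality_general {n : ℕ}
    (B : Set (EuclideanSpace ℝ (Fin n))) (hBconv : Convex ℝ B)
    (ω : EuclideanSpace ℝ (Fin n) → ℝ) (hω : ContDiff ℝ 1 ω)
    (μω : ℝ) (hμ : 0 < μω) (hsc : StrongConvexOn Set.univ μω ω)
    (β βplus g : EuclideanSpace ℝ (Fin n)) (η : ℝ)
    (hβplus : βplus ∈ B)
    (hmin : ∀ z ∈ B, η * ⟪g, βplus⟫ + bregman ω β βplus ≤ η * ⟪g, z⟫ + bregman ω β z) :
    ∀ u ∈ B, bregman ω βplus u ≤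
      bregman ω β u + η * ⟪g, u - β⟫ + η ^ 2 / (2 * μω) * ‖g‖ ^ 2 := by
  intro u hu
  have hdiff : Differentiable ℝ ω := hω.differentiable one_ne_zero
  have hopt : 0 ≤ ⟪η • g + (gradient ω βplus - gradient ω β), u - βplus⟫ :=
    IsMinOn.inner_add_gradient_sub_nonneg
      (fun z hz ↦ by simpa [real_inner_smul_left] using hmin z hz) hBconv hβplus hu (hdiff βplus)
  have hstrong : μω / 2 * ‖βplus - β‖ ^ 2 ≤ bregman ω β βplus :=
    hsc.sq_le_bregman (Set.mem_univ _) (Set.mem_univ _) (hdiff β)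
  have hyoung := real_inner_le_norm_sq_div_add_mul_norm_sq hμ (η • g) (β - βplus)
  rw [norm_smul, mul_pow, Real.norm_eq_abs, sq_abs, norm_sub_rev] at hyoung
  rw [bregman_three_point ω β βplus u]
  simp only [inner_add_left, real_inner_smul_left, inner_sub_right] at hopt hyoung ⊢
  linarith [mul_div_right_comm (η ^ 2) (‖g‖ ^ 2) (2 * μω)]

theorem prox_step_inequality {n : ℕ}
    (B : Set (EuclideanSpace ℝ (Fin n))) (hBc : IsClosed B) (hBconv : Convex ℝ B)
    (ω : EuclideanSpace ℝ (Fin n) → ℝ) (hω : ContDiff ℝ 1 ω)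
    (μω : ℝ) (hμ : 0 < μω) (hsc : StrongConvexOn Set.univ μω ω)
    (β βplus g : EuclideanSpace ℝ (Fin n)) (η : ℝ) (hη : 0 < η)
    (hβ : β ∈ B) (hβplus : βplus ∈ B)
    (hmin : ∀ z ∈ B, η * ⟪g, βplus⟫ + bregman ω β βplus ≤ η * ⟪g, z⟫ + bregman ω β z) :
    ∀ u ∈ B, bregman ω βplus u ≤
      bregman ω β u + η * ⟪g, u - β⟫ + η ^ 2 / (2 * μω) * ‖g‖ ^ 2 :=
  prox_step_inequality_general B hBconv ω hω μω hμ hsc β βplus g η hβplus hmin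
end

section
/- Let θ, δ > 0 and suppose a nonnegative sequence {v_t} satisfies v_{t+1} ≤ (1 - θη_t)v_t + δη_t² for all t ≥ 0, where η_t ∈ (0, 1/θ] is the self-tuned sequence with η_{t+1} = η_t(1 - (θ/2)η_t) and v₀ ≤ (2δ/θ)η₀. Then v_t ≤ (2δ/θ)η_t for all t ≥ 0, and hence v_t ≤ (4δ/θ²)(1/t) for all t ≥ 1. -/
/-!
The sequence `w t = (2δ/θ) η t` solves the recursion with equality, so a comparison argument
bounds `v` by it. For the rate, `1/η` grows by at least `θ/2` per step, since
`1/(x(1-a)) ≥ (1+a)/x`; hence `η t < 2/(θ t)`.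
-/

theorem le_of_le_affine_recurrence {a b v w : ℕ → ℝ} (ha : ∀ t, 0 ≤ a t) (h0 : v 0 ≤ w 0)
    (hv : ∀ t, v (t + 1) ≤ a t * v t + b t) (hw : ∀ t, a t * w t + b t ≤ w (t + 1)) :
    ∀ t, v t ≤ w t := by
  intro t
  induction t with
  | zero => exact h0
  | succ t ih =>
    calc v (t + 1) ≤ a t * v t + b t := hv t
      _ ≤ a t * w t + b t := by gcongr; exact ha t
      _ ≤ w (t + 1) := hw t

theorem one_div_add_le_one_div_mul_one_sub {x c : ℝ} (hx : 0 < x) (hcx : c * x < 1) :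
    1 / x + c ≤ 1 / (x * (1 - c * x)) := by
  have h1 : 0 < 1 - c * x := by linarith
  rw [div_add' _ _ _ hx.ne', div_le_div_iff₀ hx (by positivity)]
  nlinarith [sq_nonneg (c * x)]

section SelfTuned

variable {θ : ℝ} {η : ℕ → ℝ} (hθ : 0 < θ) (h0 : 0 < η 0) (h0' : η 0 ≤ 1 / θ)
  (hrec : ∀ t, η (t + 1) = η t * (1 - θ / 2 * η t))
include hθ h0 h0' hrec

theorem selfTuned_pos_and_le (t : ℕ) : 0 < η t ∧ θ * η t ≤ 1 := by
  induction t with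
  | zero => exact ⟨h0, by rwa [le_div_iff₀' hθ] at h0'⟩
  | succ t ih =>
    obtain ⟨hpos, hle⟩ := ih
    have hfac : 0 < 1 - θ / 2 * η t := by linarith
    rw [hrec t]
    refine ⟨mul_pos hpos hfac, ?_⟩
    nlinarith [mul_pos hθ hpos]

theorem add_le_one_div_selfTuned (t : ℕ) : 1 / η 0 + t * (θ / 2) ≤ 1 / η t := by
  induction t with
  | zero => simp
  | succ t ih =>
    obtain ⟨hpos, hle⟩ := selfTuned_pos_and_le hθ h0 h0' hrec t
    have hstep : 1 / η t + θ / 2 ≤ 1 / η (t + 1) := by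
      rw [hrec t]
      exact one_div_add_le_one_div_mul_one_sub hpos (by linarith)
    push_cast
    linarith

theorem selfTuned_lt {t : ℕ} (ht : 1 ≤ t) : η t < 2 / (θ * t) := by
  have hpos := (selfTuned_pos_and_le hθ h0 h0' hrec t).1
  have hgrowth := add_le_one_div_selfTuned hθ h0 h0' hrec t
  have ht' : (0 : ℝ) < t := by exact_mod_cast ht
  rw [lt_div_iff₀ (by positivity)]
  rw [le_div_iff₀ hpos] at hgrowth
  nlinarith [one_div_pos.2 h0]

end SelfTuned

theorem recursive_inequality_rate_general (θ δ : ℝ) (hθ : 0 < θ) (hδ : 0 < δ)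
    (η : ℕ → ℝ) (h0 : 0 < η 0) (h0' : η 0 ≤ 1 / θ)
    (hrec : ∀ t, η (t + 1) = η t * (1 - θ / 2 * η t))
    (v : ℕ → ℝ)
    (hv0 : v 0 ≤ 2 * δ / θ * η 0)
    (hvrec : ∀ t, v (t + 1) ≤ (1 - θ * η t) * v t + δ * (η t) ^ 2) :
    (∀ t, v t ≤ 2 * δ / θ * η t) ∧
      (∀ t : ℕ, 1 ≤ t → v t ≤ 4 * δ / θ ^ 2 * (1 / t)) := by
  have hη := selfTuned_pos_and_le hθ h0 h0' hrec
  have hbound : ∀ t, v t ≤ 2 * δ / θ * η t := by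
    refine le_of_le_affine_recurrence (fun t => sub_nonneg.2 (hη t).2) hv0 hvrec fun t => ?_
    exact le_of_eq (by rw [hrec t]; field_simp; ring)
  refine ⟨hbound, fun t ht => ?_⟩
  have ht' : (0 : ℝ) < t := by exact_mod_cast ht
  calc v t ≤ 2 * δ / θ * η t := hbound t
    _ ≤ 2 * δ / θ * (2 / (θ * t)) := by gcongr; exact (selfTuned_lt hθ h0 h0' hrec ht).le
    _ = 4 * δ / θ ^ 2 * (1 / t) := by field_simp; ring

theorem recursive_inequality_rate (θ δ : ℝ) (hθ : 0 < θ) (hδ : 0 < δ)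
    (η : ℕ → ℝ) (h0 : 0 < η 0) (h0' : η 0 ≤ 1 / θ)
    (hrec : ∀ t, η (t + 1) = η t * (1 - θ / 2 * η t))
    (v : ℕ → ℝ) (hv : ∀ t, 0 ≤ v t)
    (hv0 : v 0 ≤ 2 * δ / θ * η 0)
    (hvrec : ∀ t, v (t + 1) ≤ (1 - θ * η t) * v t + δ * (η t) ^ 2) :
    (∀ t, v t ≤ 2 * δ / θ * η t) ∧
      (∀ t : ℕ, 1 ≤ t → v t ≤ 4 * δ / θ ^ 2 * (1 / t)) :=
  recursive_inequality_rate_general θ δ hθ hδ η h0 h0' hrec v hv0 hvrec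
end
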